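/- arXiv:2003.04213 — 5 statements merged into one kernel-verified Lean document; each statement's English description precedes it below -/
import Mathlib

section
/- Let V be a finite set and let H be a finite indexed family of 3-element subsets (hyperedges) of V. For every S ⊆ V, the weighted cut of the motif adjacency matrix equals twice the motif cut: Σ_{u∈S} Σ_{v∈V∖S} W(u,v) = 2 · cut_M(S). -/
/-- For a finite indexed family `H` of 3-element subsets (hyperedges) of a
finite set `V`, for every `S ⊆ V` the weighted cut of the motif adjacency matrix equals
twice the motif cut: `Σ_{u∈S} Σ_{v∈V∖S} W(u,v) = 2 * cut_M(S)`, where `W(u,v)` is the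
number of hyperedges containing both `u` and `v`, and `cut_M(S)` is the number of
hyperedges with at least one vertex in `S` and at least one vertex in `V∖S`. -/
theorem stmt3 {V ι : Type*} [Fintype V] [DecidableEq V] [Fintype ι]
    (H : ι → Finset V) (huniform : ∀ i, (H i).card = 3) (S : Finset V) :
    ∑ u ∈ S, ∑ v ∈ Sᶜ, (Finset.univ.filter (fun i => u ∈ H i ∧ v ∈ H i)).card
      = 2 * (Finset.univ.filter
          (fun i => (H i ∩ S).Nonempty ∧ (H i \ S).Nonempty)).card := by
  classical
  have key : ∀ u ∈ S, ∀ v ∈ Sᶜ,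
      (Finset.univ.filter (fun i => u ∈ H i ∧ v ∈ H i)).card
        = ∑ i : ι, (if u ∈ H i ∧ v ∈ H i then 1 else 0) := by
    intro u _ v _
    rw [Finset.card_filter]
  calc ∑ u ∈ S, ∑ v ∈ Sᶜ, (Finset.univ.filter (fun i => u ∈ H i ∧ v ∈ H i)).card
      = ∑ u ∈ S, ∑ v ∈ Sᶜ, ∑ i : ι, (if u ∈ H i ∧ v ∈ H i then 1 else 0) := by
        apply Finset.sum_congr rfl; intro u hu
        exact Finset.sum_congr rfl (fun v hv => key u hu v hv)
    _ = ∑ i : ι, ∑ u ∈ S, ∑ v ∈ Sᶜ, (if u ∈ H i ∧ v ∈ H i then 1 else 0) := by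
        have step : ∑ u ∈ S, ∑ v ∈ Sᶜ, ∑ i : ι, (if u ∈ H i ∧ v ∈ H i then 1 else 0)
            = ∑ u ∈ S, ∑ i : ι, ∑ v ∈ Sᶜ, (if u ∈ H i ∧ v ∈ H i then 1 else 0) :=
          Finset.sum_congr rfl (fun u _ => Finset.sum_comm)
        rw [step, Finset.sum_comm]
    _ = ∑ i : ι, (H i ∩ S).card * (H i \ S).card := by
        apply Finset.sum_congr rfl; intro i _
        have : ∑ u ∈ S, ∑ v ∈ Sᶜ, (if u ∈ H i ∧ v ∈ H i then 1 else 0)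
            = ∑ u ∈ S, (if u ∈ H i then (Sᶜ.filter (· ∈ H i)).card else 0) := by
          apply Finset.sum_congr rfl; intro u _
          by_cases hu : u ∈ H i
          · simp only [hu, true_and, if_true]
            rw [Finset.card_filter]
          · simp [hu]
        rw [this]
        rw [← Finset.sum_filter, Finset.sum_const, smul_eq_mul]
        congr 1
        · congr 1
          ext x; simp [and_comm]
        · congr 1
          ext x; simp [Finset.mem_sdiff, and_comm]
    _ = ∑ i : ι, (if (H i ∩ S).Nonempty ∧ (H i \ S).Nonempty then 2 else 0) := by
        apply Finset.sum_congr rfl; intro i _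
        have hsum : (H i ∩ S).card + (H i \ S).card = 3 := by
          rw [Finset.card_inter_add_card_sdiff]
          exact huniform i
        by_cases h1 : (H i ∩ S).Nonempty
        · by_cases h2 : (H i \ S).Nonempty
          · simp only [h1, h2, and_self, if_true]
            have c1 := Finset.card_pos.mpr h1
            have c2 := Finset.card_pos.mpr h2
            nlinarith [c1, c2, hsum]
          · simp only [h2, and_false, if_false]
            rw [Finset.not_nonempty_iff_eq_empty] at h2
            simp [h2]
        · simp only [h1, false_and, if_false]
          rw [Finset.not_nonempty_iff_eq_empty] at h1
          simp [h1]
    _ = 2 * (Finset.univ.filter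
          (fun i => (H i ∩ S).Nonempty ∧ (H i \ S).Nonempty)).card := by
        rw [Finset.card_filter, Finset.mul_sum]
        apply Finset.sum_congr rfl; intro i _
        split <;> simp
end

section
/- Let H be a finite 3-uniform hypergraph on a finite vertex set V (a finite indexed family of 3-element subsets of V), and let S ⊆ V be a set with vol_M(S) > 0 and vol_M(V∖S) > 0. Then the conductance of S in the motif adjacency matrix equals the motif conductance of S: cut_W(S) / min(vol_W(S), vol_W(V∖S)) = cut_M(S) / min(vol_M(S), vol_M(V∖S)). -/
open Finset

private lemma pair_sum {V ι : Type*} [Fintype V] [DecidableEq V] [Fintype ι]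
    (H : ι → Finset V) (A B : Finset V) :
    ∑ u ∈ A, ∑ v ∈ B, (Finset.univ.filter (fun i => u ∈ H i ∧ v ∈ H i)).card
      = ∑ i, (H i ∩ A).card * (H i ∩ B).card := by
  simp_rw [Finset.card_filter]
  rw [show (∑ u ∈ A, ∑ v ∈ B, ∑ i, if u ∈ H i ∧ v ∈ H i then (1:ℕ) else 0)
      = ∑ i, ∑ u ∈ A, ∑ v ∈ B, if u ∈ H i ∧ v ∈ H i then (1:ℕ) else 0 by
    exact (Finset.sum_congr rfl fun u _ => Finset.sum_comm).trans Finset.sum_comm]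
  refine Finset.sum_congr rfl fun i _ => ?_
  have h1 : (H i ∩ A).card = ∑ u ∈ A, if u ∈ H i then (1:ℕ) else 0 := by
    rw [Finset.inter_comm, ← Finset.filter_mem_eq_inter, Finset.card_filter]
  have h2 : (H i ∩ B).card = ∑ v ∈ B, if v ∈ H i then (1:ℕ) else 0 := by
    rw [Finset.inter_comm, ← Finset.filter_mem_eq_inter, Finset.card_filter]
  rw [h1, h2, Finset.sum_mul_sum]
  refine Finset.sum_congr rfl fun u _ => Finset.sum_congr rfl fun v _ => ?_
  by_cases hu : u ∈ H i <;> by_cases hv : v ∈ H i <;> simp [hu, hv]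

private lemma erase_sum {V ι : Type*} [Fintype V] [DecidableEq V] [Fintype ι]
    (H : ι → Finset V) (huniform : ∀ i, (H i).card = 3) (u : V) :
    ∑ v ∈ Finset.univ.erase u, (Finset.univ.filter (fun i => u ∈ H i ∧ v ∈ H i)).card
      = 2 * (Finset.univ.filter (fun i => u ∈ H i)).card := by
  simp_rw [Finset.card_filter]
  rw [Finset.sum_comm, Finset.mul_sum]
  refine Finset.sum_congr rfl fun i _ => ?_
  by_cases hu : u ∈ H i
  · simp only [hu, true_and, if_true, mul_one]
    have e1 : ∑ v ∈ Finset.univ.erase u, (if v ∈ H i then (1:ℕ) else 0)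
        = ((Finset.univ.erase u).filter (· ∈ H i)).card := (Finset.card_filter _ _).symm
    rw [e1]
    have e2 : (Finset.univ.erase u).filter (· ∈ H i) = (H i).erase u := by
      ext v; simp [Finset.mem_erase, and_comm]
    rw [e2, Finset.card_erase_of_mem hu, huniform]
  · simp [hu]

/-- For a finite 3-uniform hypergraph `H` on a finite vertex set `V` and a set
`S ⊆ V` with `vol_M(S) > 0` and `vol_M(V∖S) > 0`, the conductance of `S` in the motif
adjacency matrix equals the motif conductance of `S`:
`cut_W(S) / min(vol_W(S), vol_W(V∖S)) = cut_M(S) / min(vol_M(S), vol_M(V∖S))`. -/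
theorem stmt5 {V ι : Type*} [Fintype V] [DecidableEq V] [Fintype ι]
    (H : ι → Finset V) (huniform : ∀ i, (H i).card = 3) (S : Finset V)
    -- deg_H(v) = number of hyperedges containing v; vol_M(A) = Σ_{v∈A} deg_H(v)
    (volM : Finset V → ℕ)
    (hvolM : ∀ A : Finset V, volM A = ∑ v ∈ A, (Finset.univ.filter (fun i => v ∈ H i)).card)
    -- cut_M(A) = number of hyperedges with a vertex in A and a vertex outside A
    (cutM : Finset V → ℕ)
    (hcutM : ∀ A : Finset V,
      cutM A = (Finset.univ.filter (fun i => (H i ∩ A).Nonempty ∧ (H i \ A).Nonempty)).card)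
    -- W(u,v) = number of hyperedges containing both u and v;
    -- cut_W(A) = Σ_{u∈A} Σ_{v∈V∖A} W(u,v); vol_W(A) = Σ_{u∈A} Σ_{v≠u} W(u,v)
    (cutW volW : Finset V → ℕ)
    (hcutW : ∀ A : Finset V, cutW A =
      ∑ u ∈ A, ∑ v ∈ Aᶜ, (Finset.univ.filter (fun i => u ∈ H i ∧ v ∈ H i)).card)
    (hvolW : ∀ A : Finset V, volW A =
      ∑ u ∈ A, ∑ v ∈ Finset.univ.erase u,
        (Finset.univ.filter (fun i => u ∈ H i ∧ v ∈ H i)).card)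
    (hS : 0 < volM S) (hSc : 0 < volM Sᶜ) :
    (cutW S : ℝ) / min (volW S : ℝ) (volW Sᶜ : ℝ)
      = (cutM S : ℝ) / min (volM S : ℝ) (volM Sᶜ : ℝ) := by
  have hvW : ∀ A : Finset V, volW A = 2 * volM A := by
    intro A
    rw [hvolW, hvolM, Finset.mul_sum]
    exact Finset.sum_congr rfl fun u _ => erase_sum H huniform u
  have hcW : cutW S = 2 * cutM S := by
    rw [hcutW, pair_sum, hcutM, Finset.card_filter, Finset.mul_sum]
    refine Finset.sum_congr rfl fun i _ => ?_
    have hsd : H i \ S = H i ∩ Sᶜ := by ext v; simp [Finset.mem_sdiff]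
    have hsum : (H i ∩ S).card + (H i ∩ Sᶜ).card = 3 := by
      have f1 : H i ∩ S = (H i).filter (· ∈ S) := by ext v; simp [and_comm]
      have f2 : H i ∩ Sᶜ = (H i).filter (¬ · ∈ S) := by ext v; simp [and_comm]
      rw [f1, f2, Finset.card_filter_add_card_filter_not, huniform]
    by_cases hne : (H i ∩ S).Nonempty ∧ (H i \ S).Nonempty
    · have h1 : 1 ≤ (H i ∩ S).card := Finset.card_pos.mpr hne.1
      have h2 : 1 ≤ (H i ∩ Sᶜ).card := Finset.card_pos.mpr (hsd ▸ hne.2)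
      simp only [hne, if_true, mul_one]
      have : (H i ∩ S).card = 1 ∧ (H i ∩ Sᶜ).card = 2
          ∨ (H i ∩ S).card = 2 ∧ (H i ∩ Sᶜ).card = 1 := by omega
      rcases this with ⟨a, b⟩ | ⟨a, b⟩ <;> rw [a, b] <;> simp
    · simp only [hne, if_false, mul_zero]
      rw [hsd] at hne
      rcases Finset.eq_empty_or_nonempty (H i ∩ S) with h | h
      · simp [h]
      rcases Finset.eq_empty_or_nonempty (H i ∩ Sᶜ) with h2 | h2
      · simp [h2]
      exact absurd ⟨h, h2⟩ hne
  rw [hvW, hvW, hcW]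
  push_cast
  have hmin : min (2*(volM S:ℝ)) (2*(volM Sᶜ:ℝ)) = 2 * min (volM S:ℝ) (volM Sᶜ:ℝ) := by
    rcases le_total (volM S:ℝ) (volM Sᶜ:ℝ) with h | h
    · rw [min_eq_left (by linarith), min_eq_left h]
    · rw [min_eq_right (by linarith), min_eq_right h]
  rw [hmin, mul_div_mul_left _ _ (by norm_num : (2:ℝ) ≠ 0)]
end

section
/- Let k ≥ 2 and let H be a finite k-uniform hypergraph on a finite vertex set V (a finite indexed family of k-element subsets of V). For every S ⊆ V: (k−1)·cut_M(S) ≤ cut_W(S) ≤ ⌊k²/4⌋·cut_M(S). -/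
lemma stmt6_sum_eq {V ι : Type*} [Fintype V] [DecidableEq V] [Fintype ι]
    (H : ι → Finset V) (S : Finset V) :
    ∑ u ∈ S, ∑ v ∈ Sᶜ, (Finset.univ.filter (fun i => u ∈ H i ∧ v ∈ H i)).card
      = ∑ i : ι, (H i ∩ S).card * (H i \ S).card := by
  have h1 : ∀ u v, (Finset.univ.filter (fun i : ι => u ∈ H i ∧ v ∈ H i)).card
      = ∑ i : ι, (if u ∈ H i then 1 else 0) * (if v ∈ H i then 1 else 0) := by
    intro u v
    rw [Finset.card_filter]
    apply Finset.sum_congr rfl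
    intro i _
    by_cases h : u ∈ H i <;> by_cases h' : v ∈ H i <;> simp [h, h']
  simp only [h1]
  calc ∑ u ∈ S, ∑ v ∈ Sᶜ, ∑ i : ι, (if u ∈ H i then 1 else 0) * (if v ∈ H i then 1 else 0)
      = ∑ u ∈ S, ∑ i : ι, ∑ v ∈ Sᶜ, (if u ∈ H i then 1 else 0) * (if v ∈ H i then 1 else 0) :=
        Finset.sum_congr rfl fun u _ => Finset.sum_comm
    _ = ∑ i : ι, ∑ u ∈ S, ∑ v ∈ Sᶜ, (if u ∈ H i then 1 else 0) * (if v ∈ H i then 1 else 0) :=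
        Finset.sum_comm
    _ = ∑ i : ι, (H i ∩ S).card * (H i \ S).card := by
        apply Finset.sum_congr rfl
        intro i _
        rw [← Finset.sum_mul_sum]
        congr 1
        · rw [Finset.sum_ite_mem]
          simp [Finset.inter_comm]
        · rw [Finset.sum_ite_mem]
          simp only [Finset.sum_const, smul_eq_mul, mul_one]
          congr 1
          ext v
          simp [Finset.mem_sdiff, and_comm]

lemma stmt6_prod_bounds (a b k : ℕ) (ha : 1 ≤ a) (hb : 1 ≤ b) (hab : a + b = k) :
    k - 1 ≤ a * b ∧ a * b ≤ k ^ 2 / 4 := by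
  constructor
  · obtain ⟨a', rfl⟩ := Nat.exists_eq_add_of_le ha
    obtain ⟨b', rfl⟩ := Nat.exists_eq_add_of_le hb
    subst hab
    have h : 1 + a' + (1 + b') - 1 = a' + b' + 1 := by omega
    rw [h]
    nlinarith [Nat.zero_le (a' * b')]
  · rw [Nat.le_div_iff_mul_le (by norm_num)]
    nlinarith [sq_nonneg ((a : ℤ) - b)]

/-- For a finite `k`-uniform hypergraph `H` on a finite vertex set `V`
(`k ≥ 2`), for every `S ⊆ V`:
`(k-1) * cut_M(S) ≤ cut_W(S) ≤ ⌊k²/4⌋ * cut_M(S)`, where `cut_W(S)` is the weighted cut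
in the motif adjacency matrix and `cut_M(S)` the motif cut. -/
theorem stmt6 {V ι : Type*} [Fintype V] [DecidableEq V] [Fintype ι]
    (k : ℕ) (hk : 2 ≤ k) (H : ι → Finset V) (huniform : ∀ i, (H i).card = k)
    (S : Finset V) :
    (k - 1) * (Finset.univ.filter
        (fun i => (H i ∩ S).Nonempty ∧ (H i \ S).Nonempty)).card
      ≤ ∑ u ∈ S, ∑ v ∈ Sᶜ, (Finset.univ.filter (fun i => u ∈ H i ∧ v ∈ H i)).card
    ∧ ∑ u ∈ S, ∑ v ∈ Sᶜ, (Finset.univ.filter (fun i => u ∈ H i ∧ v ∈ H i)).card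
      ≤ (k ^ 2 / 4) * (Finset.univ.filter
          (fun i => (H i ∩ S).Nonempty ∧ (H i \ S).Nonempty)).card := by
  rw [stmt6_sum_eq]
  set T := Finset.univ.filter
      (fun i : ι => (H i ∩ S).Nonempty ∧ (H i \ S).Nonempty) with hT
  have hsum : ∑ i : ι, (H i ∩ S).card * (H i \ S).card
      = ∑ i ∈ T, (H i ∩ S).card * (H i \ S).card := by
    rw [eq_comm]
    apply Finset.sum_subset (Finset.subset_univ T)
    intro i _ hi
    simp only [hT, Finset.mem_filter, Finset.mem_univ, true_and, not_and_or,
      Finset.not_nonempty_iff_eq_empty] at hi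
    rcases hi with h | h <;> simp [h]
  have hbounds : ∀ i ∈ T, k - 1 ≤ (H i ∩ S).card * (H i \ S).card
      ∧ (H i ∩ S).card * (H i \ S).card ≤ k ^ 2 / 4 := by
    intro i hi
    simp only [hT, Finset.mem_filter, Finset.mem_univ, true_and] at hi
    exact stmt6_prod_bounds _ _ k (Finset.card_pos.mpr hi.1) (Finset.card_pos.mpr hi.2)
      (by rw [Finset.card_inter_add_card_sdiff]; exact huniform i)
  rw [hsum]
  constructor
  · calc (k - 1) * T.card = ∑ _i ∈ T, (k - 1) := by
          rw [Finset.sum_const, smul_eq_mul, mul_comm]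
      _ ≤ _ := Finset.sum_le_sum fun i hi => (hbounds i hi).1
  · calc ∑ i ∈ T, (H i ∩ S).card * (H i \ S).card
        ≤ ∑ _i ∈ T, k ^ 2 / 4 := Finset.sum_le_sum fun i hi => (hbounds i hi).2
      _ = (k ^ 2 / 4) * T.card := by rw [Finset.sum_const, smul_eq_mul, mul_comm]
end

section
/- Let k ≥ 2 and let H be a finite k-uniform hypergraph on a finite vertex set V (a finite indexed family of k-element subsets of V), and let S ⊆ V be a set with vol_M(S) > 0 and vol_M(V∖S) > 0. Then the weighted conductance of S in the motif adjacency matrix is sandwiched by the motif conductance: φ_M(S) ≤ φ_W(S) ≤ (⌊k²/4⌋/(k−1)) · φ_M(S). -/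
/-- For a finite `k`-uniform hypergraph `H` on a finite vertex set `V`
(`k ≥ 2`) and a set `S ⊆ V` with `vol_M(S) > 0` and `vol_M(V∖S) > 0`, the weighted
conductance of `S` in the motif adjacency matrix is sandwiched by the motif conductance:
`φ_M(S) ≤ φ_W(S) ≤ (⌊k²/4⌋/(k-1)) * φ_M(S)`. -/
theorem stmt7 {V ι : Type*} [Fintype V] [DecidableEq V] [Fintype ι]
    (k : ℕ) (hk : 2 ≤ k) (H : ι → Finset V) (huniform : ∀ i, (H i).card = k)
    (S : Finset V)
    (volM cutM cutW volW : Finset V → ℕ)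
    (hvolM : ∀ A : Finset V,
      volM A = ∑ v ∈ A, (Finset.univ.filter (fun i => v ∈ H i)).card)
    (hcutM : ∀ A : Finset V,
      cutM A = (Finset.univ.filter (fun i => (H i ∩ A).Nonempty ∧ (H i \ A).Nonempty)).card)
    (hcutW : ∀ A : Finset V, cutW A =
      ∑ u ∈ A, ∑ v ∈ Aᶜ, (Finset.univ.filter (fun i => u ∈ H i ∧ v ∈ H i)).card)
    (hvolW : ∀ A : Finset V, volW A =
      ∑ u ∈ A, ∑ v ∈ Finset.univ.erase u,
        (Finset.univ.filter (fun i => u ∈ H i ∧ v ∈ H i)).card)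
    (hS : 0 < volM S) (hSc : 0 < volM Sᶜ)
    (phiM phiW : ℝ)
    (hphiM : phiM = (cutM S : ℝ) / min (volM S : ℝ) (volM Sᶜ : ℝ))
    (hphiW : phiW = (cutW S : ℝ) / min (volW S : ℝ) (volW Sᶜ : ℝ)) :
    phiM ≤ phiW ∧ phiW ≤ ((k ^ 2 / 4 : ℕ) : ℝ) / ((k : ℝ) - 1) * phiM := by
  classical
  -- volW = (k-1) * volM
  have hvol : ∀ A : Finset V, volW A = (k - 1) * volM A := by
    intro A
    rw [hvolW A, hvolM A, Finset.mul_sum]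
    refine Finset.sum_congr rfl fun u _ => ?_
    have h1 : ∀ v : V, (Finset.univ.filter (fun i => u ∈ H i ∧ v ∈ H i)).card
        = ∑ i : ι, if u ∈ H i ∧ v ∈ H i then 1 else 0 := fun v => Finset.card_filter _ _
    simp only [h1]
    rw [Finset.sum_comm]
    have h2 : ∀ i : ι, (∑ v ∈ Finset.univ.erase u, if u ∈ H i ∧ v ∈ H i then 1 else 0)
        = if u ∈ H i then k - 1 else 0 := by
      intro i
      by_cases hu : u ∈ H i
      · simp only [hu, true_and, if_pos]
        rw [← Finset.card_filter]
        have h3 : (Finset.univ.erase u).filter (fun v => v ∈ H i) = (H i).erase u := by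
          ext v; simp [Finset.mem_erase, and_comm]
        rw [h3, Finset.card_erase_of_mem hu, huniform i]
      · simp [hu]
    simp only [h2]
    rw [Finset.card_filter, Finset.mul_sum]
    refine Finset.sum_congr rfl fun i _ => ?_
    by_cases h : i ∈ Finset.univ.filter fun i => u ∈ H i <;>
      simp_all
  -- cutW as sum over edges
  have hcutW' : cutW S = ∑ i : ι, ((H i ∩ S).card * (H i \ S).card) := by
    rw [hcutW S]
    have h1 : ∀ (u v : V), (Finset.univ.filter (fun i => u ∈ H i ∧ v ∈ H i)).card
        = ∑ i : ι, (if u ∈ H i then 1 else 0) * (if v ∈ H i then 1 else 0) := by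
      intro u v
      rw [Finset.card_filter]
      refine Finset.sum_congr rfl fun i _ => ?_
      by_cases h : u ∈ H i <;> by_cases h' : v ∈ H i <;> simp [h, h']
    simp only [h1]
    have h2 : ∀ u : V, (∑ v ∈ Sᶜ, ∑ i : ι, (if u ∈ H i then 1 else 0) * (if v ∈ H i then 1 else 0))
        = ∑ i : ι, (if u ∈ H i then 1 else 0) * (∑ v ∈ Sᶜ, if v ∈ H i then 1 else 0) := by
      intro u
      rw [Finset.sum_comm]
      exact Finset.sum_congr rfl fun i _ => by rw [Finset.mul_sum]
    rw [Finset.sum_congr rfl fun u _ => h2 u]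
    rw [Finset.sum_comm]
    refine Finset.sum_congr rfl fun i _ => ?_
    rw [← Finset.sum_mul]
    congr 1
    · rw [← Finset.card_filter]
      congr 1
      ext v; simp [Finset.mem_inter, and_comm]
    · rw [← Finset.card_filter]
      congr 1
      ext v; simp [Finset.mem_sdiff, and_comm]
  -- cutM as sum over edges
  have hcutM' : cutM S = ∑ i : ι, (if (H i ∩ S).Nonempty ∧ (H i \ S).Nonempty then 1 else 0) := by
    rw [hcutM S, Finset.card_filter]
  -- per-edge facts
  have hab : ∀ i : ι, (H i ∩ S).card + (H i \ S).card = k := by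
    intro i; rw [Finset.card_inter_add_card_sdiff, huniform i]
  -- lower bound
  have hlow : (k - 1) * cutM S ≤ cutW S := by
    rw [hcutM', hcutW', Finset.mul_sum]
    refine Finset.sum_le_sum fun i _ => ?_
    by_cases h : (H i ∩ S).Nonempty ∧ (H i \ S).Nonempty
    · rw [if_pos h, mul_one]
      obtain ⟨h1, h2⟩ := h
      have ha := Finset.card_pos.mpr h1
      have hb := Finset.card_pos.mpr h2
      obtain ⟨a, ha'⟩ := Nat.exists_eq_add_of_le ha
      obtain ⟨b, hb'⟩ := Nat.exists_eq_add_of_le hb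
      have hs := hab i
      have e : (H i ∩ S).card * (H i \ S).card = a * b + (a + b + 1) := by
        rw [ha', hb']; ring
      have hk' : k - 1 = a + b + 1 := by omega
      rw [hk', e]
      exact Nat.le_add_left _ _
    · rw [if_neg h, mul_zero]
      exact Nat.zero_le _
  -- upper bound
  have hup : cutW S ≤ (k ^ 2 / 4) * cutM S := by
    rw [hcutM', hcutW', Finset.mul_sum]
    refine Finset.sum_le_sum fun i _ => ?_
    by_cases h : (H i ∩ S).Nonempty ∧ (H i \ S).Nonempty
    · rw [if_pos h, mul_one]
      set a := (H i ∩ S).card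
      set b := (H i \ S).card
      have hsum : a + b = k := hab i
      rw [Nat.le_div_iff_mul_le (by norm_num : 0 < 4)]
      have h2 : 2 * a * b ≤ a ^ 2 + b ^ 2 := two_mul_le_add_sq a b
      have : k ^ 2 = (a + b) ^ 2 := by rw [hsum]
      nlinarith
    · rw [if_neg h, mul_zero, Nat.le_zero, Nat.mul_eq_zero]
      rw [not_and_or] at h
      rcases h with h | h <;>
        simp [Finset.card_eq_zero, Finset.not_nonempty_iff_eq_empty.mp h]
  -- final real arithmetic
  have hk1 : (1 : ℕ) ≤ k := le_trans (by norm_num) hk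
  have hc : (0 : ℝ) < (k : ℝ) - 1 := by
    have : (2 : ℝ) ≤ (k : ℝ) := by exact_mod_cast hk
    linarith
  have hcast : ((k - 1 : ℕ) : ℝ) = (k : ℝ) - 1 := by
    push_cast [hk1]; ring
  set m := min (volM S : ℝ) (volM Sᶜ : ℝ) with hm
  have hmpos : 0 < m := lt_min (by exact_mod_cast hS) (by exact_mod_cast hSc)
  have hminW : min (volW S : ℝ) (volW Sᶜ : ℝ) = ((k : ℝ) - 1) * m := by
    rw [hvol S, hvol Sᶜ, hm]
    push_cast [hk1]
    rw [← mul_min_of_nonneg _ _ (le_of_lt hc)]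
  have hlowR : ((k : ℝ) - 1) * (cutM S : ℝ) ≤ (cutW S : ℝ) := by
    rw [← hcast]
    exact_mod_cast hlow
  have hupR : (cutW S : ℝ) ≤ ((k ^ 2 / 4 : ℕ) : ℝ) * (cutM S : ℝ) := by
    exact_mod_cast hup
  rw [hphiM, hphiW, hminW]
  constructor
  · rw [div_le_div_iff₀ hmpos (mul_pos hc hmpos)]
    nlinarith
  · rw [div_mul_div_comm, div_le_div_iff₀ (mul_pos hc hmpos) (mul_pos hc hmpos)]
    nlinarith [mul_pos hc hmpos]
end

section
/- Let φ be a real number with 0 < φ ≤ 1, let M be a real number with M > 1, let g be a positive natural number with 2g ≥ 3·log₂(M)/φ, and let a : ℕ → ℝ satisfy a(2g) ≥ 1 and a(g) ≤ M. Then there exists a natural number j with g < j ≤ 2g such that a(j−1) < (1+φ)·a(j). -/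
/-! If `a (j - 1) ≥ (1 + φ) a j` held at every level `j ∈ (g, 2g]`, chaining these `g` inequalities
would give `a g ≥ (1 + φ)^g a (2g) ≥ (1 + φ)^g`. Since `2^φ ≤ 1 + φ` for `φ ∈ [0, 1]`, this is at
least `2^(φ g)`, and `φ g ≥ (3/2) log₂ M > log₂ M` makes it exceed `M ≥ a g`. -/

theorem pow_mul_le_of_forall_mul_le_pred {α : Type*} [Semiring α] [PartialOrder α]
    [IsOrderedRing α] {r : α} (hr : 0 ≤ r) {a : ℕ → α} {m n : ℕ}
    (h : ∀ j, m < j → j ≤ m + n → r * a j ≤ a (j - 1)) : r ^ n * a (m + n) ≤ a m := by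
  induction n with
  | zero => simp
  | succ n ih =>
    calc r ^ (n + 1) * a (m + (n + 1)) = r ^ n * (r * a (m + n + 1)) := by
          rw [pow_succ, mul_assoc, ← add_assoc]
      _ ≤ r ^ n * a (m + n) := by
          gcongr
          exact h _ (by omega) (by omega)
      _ ≤ a m := ih fun j hj₁ hj₂ => h j hj₁ (by omega)

theorem exists_lt_mul_of_lt_pow_mul {α : Type*} [Semiring α] [LinearOrder α]
    [IsOrderedRing α] {r : α} (hr : 0 ≤ r) {a : ℕ → α} {m n : ℕ}
    (h : a m < r ^ n * a (m + n)) : ∃ j, m < j ∧ j ≤ m + n ∧ a (j - 1) < r * a j := by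
  by_contra! hle
  exact (pow_mul_le_of_forall_mul_le_pred hr hle).not_gt h

theorem lt_one_add_pow_of_logb_lt {φ M : ℝ} (hφ0 : 0 ≤ φ) (hφ1 : φ ≤ 1) (hM : 0 < M) {n : ℕ}
    (h : Real.logb 2 M < φ * n) : M < (1 + φ) ^ n :=
  calc M = 2 ^ Real.logb 2 M := (Real.rpow_logb two_pos one_lt_two.ne' hM).symm
    _ < 2 ^ (φ * n) := Real.rpow_lt_rpow_of_exponent_lt one_lt_two h
    _ = ((1 + 1 : ℝ) ^ φ) ^ n := by rw [Real.rpow_mul_natCast two_pos.le]; norm_num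
    _ ≤ (1 + φ) ^ n := by
        gcongr
        simpa using rpow_one_add_le_one_add_mul_self (s := 1) (by norm_num) hφ0 hφ1

theorem stmt10_general (φ M : ℝ) (hφ0 : 0 < φ) (hφ1 : φ ≤ 1) (hM : 1 < M)
    (g : ℕ) (hgM : (2 * g : ℝ) ≥ 3 * Real.logb 2 M / φ)
    (a : ℕ → ℝ) (htop : a (2 * g) ≥ 1) (hmid : a g ≤ M) :
    ∃ j : ℕ, g < j ∧ j ≤ 2 * g ∧ a (j - 1) < (1 + φ) * a j := by
  have hlogb : 0 < Real.logb 2 M := Real.logb_pos one_lt_two hM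
  have hφg : Real.logb 2 M < φ * g := by
    rw [ge_iff_le, div_le_iff₀ hφ0] at hgM
    linarith
  have hgrowth : a g < (1 + φ) ^ g * a (g + g) :=
    calc a g ≤ M := hmid
      _ < (1 + φ) ^ g := lt_one_add_pow_of_logb_lt hφ0.le hφ1 (by linarith) hφg
      _ ≤ (1 + φ) ^ g * a (g + g) := by
          rw [← two_mul]
          exact le_mul_of_one_le_right (by positivity) htop
  rw [two_mul]
  exact exists_lt_mul_of_lt_pow_mul (by linarith) hgrowth

/-- Let `φ` be real with `0 < φ ≤ 1`, `M` real with `M > 1`, `g` a positive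
natural number with `2g ≥ 3·log₂(M)/φ`, and `a : ℕ → ℝ` with `a(2g) ≥ 1` and `a(g) ≤ M`.
Then there exists a natural number `j` with `g < j ≤ 2g` such that
`a(j-1) < (1+φ)·a(j)`. -/
theorem stmt10 (φ M : ℝ) (hφ0 : 0 < φ) (hφ1 : φ ≤ 1) (hM : 1 < M)
    (g : ℕ) (hg : 0 < g) (hgM : (2 * g : ℝ) ≥ 3 * Real.logb 2 M / φ)
    (a : ℕ → ℝ) (htop : a (2 * g) ≥ 1) (hmid : a g ≤ M) :
    ∃ j : ℕ, g < j ∧ j ≤ 2 * g ∧ a (j - 1) < (1 + φ) * a j :=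
  stmt10_general φ M hφ0 hφ1 hM g hgM a htop hmid
end
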